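/- arXiv:1612.01290 — 6 statements merged into one kernel-verified Lean document; each statement's English description precedes it below -/
import Mathlib

section
/- Let s, c ∈ ℂ with s² + c² = 1. Then 2(s² - c² + i·s·c)⁴ - (2i·s·c + s²)⁴ - (2i·s·c - c²)⁴ = 1 (Gross's example for n = 4, stated as a polynomial identity). -/
/-!
Put `x = s²`, `y = c²` and `t = i s c`, so that `t² = -x y`. Modulo this relation the left-hand side
is the homogeneous quartic `(x + y)⁴ = (s² + c²)⁴`, which equals `1`.
-/

theorem gross_quartic_identity {R : Type*} [CommRing R] (x y t : R) (ht : t ^ 2 = -(x * y)) :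
    2 * (x - y + t) ^ 4 - (x + 2 * t) ^ 4 - (2 * t - y) ^ 4 = (x + y) ^ 4 := by
  linear_combination -6 * (5 * t ^ 2 + 4 * (x - y) * t + 2 * x ^ 2 - x * y + 2 * y ^ 2) * ht

theorem gross_example (s c : ℂ) (h : s ^ 2 + c ^ 2 = 1) :
    2 * (s ^ 2 - c ^ 2 + Complex.I * s * c) ^ 4
    - (2 * Complex.I * s * c + s ^ 2) ^ 4
    - (2 * Complex.I * s * c - c ^ 2) ^ 4 = 1 := by
  have ht : (Complex.I * s * c) ^ 2 = -(s ^ 2 * c ^ 2) := by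
    linear_combination (s * c) ^ 2 * Complex.I_sq
  calc _ = (s ^ 2 + c ^ 2) ^ 4 := by
        linear_combination gross_quartic_identity (s ^ 2) (c ^ 2) _ ht
    _ = 1 := by rw [h, one_pow]
end

section
/- Let n ≥ 1 be a natural number and let ζ ∈ ℂ satisfy ζⁿ = -1. For any function α : ℂ → ℂ, the functions f = 8^{-1/4}(e^{3α} + e^{-α}), g = (-8)^{-1/4}(e^{3α} - e^{-α}), h = ζ·e^{(8/n)α} satisfy f⁴ + g⁴ + hⁿ = 1 pointwise on ℂ. -/
/-!
Write `u = exp α`. The identity `(a + b)⁴ - (a - b)⁴ = 8ab(a² + b²)` at `a = u³`, `b = u⁻¹`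
gives `f⁴ + g⁴ = u⁸ + 1`, while `hⁿ = ζⁿ u⁸ = -u⁸`.
-/

open Complex

theorem quartic_cube_add_inv_add_quartic_cube_sub_inv {K : Type*} [Field K] [CharZero K]
    {u c₁ c₂ : K} (hu : u ≠ 0) (h₁ : c₁ ^ 4 = 1 / 8) (h₂ : c₂ ^ 4 = -(1 / 8)) :
    (c₁ * (u ^ 3 + u⁻¹)) ^ 4 + (c₂ * (u ^ 3 - u⁻¹)) ^ 4 = u ^ 8 + 1 := by
  rw [mul_pow, mul_pow, h₁, h₂]
  field_simp
  ring

theorem Complex.exp_natCast_div_mul_pow {n : ℕ} (hn : n ≠ 0) (m : ℕ) (a : ℂ) :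
    exp ((m / n : ℂ) * a) ^ n = exp a ^ m := by
  rw [← exp_nat_mul, ← exp_nat_mul]
  congr 1
  field_simp

theorem modified_green_example_general (n : ℕ) (ζ : ℂ) (hζ : ζ ^ n = -1)
    (α : ℂ → ℂ) (c₁ c₂ : ℂ) (h₁ : c₁ ^ 4 = 1 / 8) (h₂ : c₂ ^ 4 = -(1 / 8)) :
    ∀ z : ℂ,
      (c₁ * (Complex.exp (3 * α z) + Complex.exp (-α z))) ^ 4
      + (c₂ * (Complex.exp (3 * α z) - Complex.exp (-α z))) ^ 4
      + (ζ * Complex.exp ((8 / n : ℂ) * α z)) ^ n = 1 := by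
  intro z
  have hn : n ≠ 0 := by
    rintro rfl
    norm_num at hζ
  have hexp_h : exp ((8 / n : ℂ) * α z) ^ n = exp (α z) ^ 8 := by
    exact_mod_cast exp_natCast_div_mul_pow hn 8 (α z)
  have hexp_cube : exp (3 * α z) = exp (α z) ^ 3 := by
    exact_mod_cast exp_nat_mul (α z) 3
  rw [hexp_cube, exp_neg, mul_pow ζ, hζ, hexp_h,
    quartic_cube_add_inv_add_quartic_cube_sub_inv (exp_ne_zero _) h₁ h₂]
  ring

theorem modified_green_example (n : ℕ) (hn : 1 ≤ n) (ζ : ℂ) (hζ : ζ ^ n = -1)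
    (α : ℂ → ℂ) (c₁ c₂ : ℂ) (h₁ : c₁ ^ 4 = 1 / 8) (h₂ : c₂ ^ 4 = -(1 / 8)) :
    ∀ z : ℂ,
      (c₁ * (Complex.exp (3 * α z) + Complex.exp (-α z))) ^ 4
      + (c₂ * (Complex.exp (3 * α z) - Complex.exp (-α z))) ^ 4
      + (ζ * Complex.exp ((8 / n : ℂ) * α z)) ^ n = 1 :=
  modified_green_example_general n ζ hζ α c₁ c₂ h₁ h₂
end

section
/- Let n ≥ 2 and let f, g, h : U → ℂ be holomorphic and nonvanishing on an open set U ⊆ ℂ with fⁿ + gⁿ + hⁿ = 1 on U. Then (g'·D²h - h'·D²g)/f^{n-1} = (h'·D²f - f'·D²h)/g^{n-1} = (f'·D²g - g'·D²f)/h^{n-1} on U, where D²F := F'' + (n-1)·(F')²/F. -/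
/-!
Differentiating `fⁿ + gⁿ + hⁿ = 1` once gives `∑ F^{n-1} F' = 0` on `U`; differentiating this
relation again, and rewriting `(n-1) F^{n-2} F'²` as `F^{n-1} · (n-1) F'²/F`, gives
`∑ F^{n-1} D²F = 0`. So the vectors `(f', g', h')` and `(D²f, D²g, D²h)` are both orthogonal to
`(f^{n-1}, g^{n-1}, h^{n-1})`, hence their cross product is a multiple of it, which is the claim.
-/

open Filter

theorem cross_div_eq_of_dot_eq_zero {K : Type*} [Field K] {a₁ a₂ a₃ x₁ x₂ x₃ y₁ y₂ y₃ : K}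
    (ha₁ : a₁ ≠ 0) (ha₂ : a₂ ≠ 0) (ha₃ : a₃ ≠ 0)
    (hx : a₁ * x₁ + a₂ * x₂ + a₃ * x₃ = 0) (hy : a₁ * y₁ + a₂ * y₂ + a₃ * y₃ = 0) :
    (x₂ * y₃ - x₃ * y₂) / a₁ = (x₃ * y₁ - x₁ * y₃) / a₂ ∧
      (x₃ * y₁ - x₁ * y₃) / a₂ = (x₁ * y₂ - x₂ * y₁) / a₃ := by
  constructor
  · rw [div_eq_div_iff ha₁ ha₂]
    linear_combination y₃ * hx - x₃ * hy
  · rw [div_eq_div_iff ha₂ ha₃]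
    linear_combination y₁ * hx - x₁ * hy

section JetRelations

variable {𝕜 : Type*} [NontriviallyNormedField 𝕜]

noncomputable def jetD2 (n : ℕ) (F : 𝕜 → 𝕜) (z : 𝕜) : 𝕜 :=
  deriv (deriv F) z + (n - 1 : 𝕜) * deriv F z ^ 2 / F z

theorem HasDerivAt.eq_zero_of_eqOn_const {φ : 𝕜 → 𝕜} {φ' c z : 𝕜} {U : Set 𝕜}
    (h : HasDerivAt φ φ' z) (hU : IsOpen U) (hz : z ∈ U) (hφ : ∀ w ∈ U, φ w = c) : φ' = 0 :=
  h.unique ((hasDerivAt_const z c).congr_of_eventuallyEq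
    (eventually_of_mem (hU.mem_nhds hz) hφ))

theorem hasDerivAt_pow_pred_mul_deriv {n : ℕ} (hn : n ≠ 0) {F : 𝕜 → 𝕜} {z : 𝕜}
    (hF : DifferentiableAt 𝕜 F z) (hF' : DifferentiableAt 𝕜 (deriv F) z) (hz : F z ≠ 0) :
    HasDerivAt (fun w => F w ^ (n - 1) * deriv F w) (F z ^ (n - 1) * jetD2 n F z) z := by
  refine ((hF.hasDerivAt.fun_pow (n - 1)).mul hF'.hasDerivAt).congr_deriv ?_
  obtain ⟨k, rfl⟩ := Nat.exists_eq_add_of_le' (Nat.one_le_iff_ne_zero.mpr hn)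
  rcases k with _ | k
  · simp [jetD2]
  · simp only [jetD2, Nat.cast_add, Nat.cast_one, add_tsub_cancel_right]
    field_simp
    ring

variable {ι : Type*} {s : Finset ι} {F : ι → 𝕜 → 𝕜} {U : Set 𝕜} {n : ℕ}

theorem sum_pow_pred_mul_deriv_eq_zero (hU : IsOpen U) (hn : (n : 𝕜) ≠ 0) {c : 𝕜}
    (hF : ∀ i ∈ s, DifferentiableOn 𝕜 (F i) U) (hsum : ∀ z ∈ U, ∑ i ∈ s, F i z ^ n = c) :
    ∀ z ∈ U, ∑ i ∈ s, F i z ^ (n - 1) * deriv (F i) z = 0 := by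
  intro z hz
  have hderiv : HasDerivAt (fun w => ∑ i ∈ s, F i w ^ n)
      (∑ i ∈ s, n * F i z ^ (n - 1) * deriv (F i) z) z :=
    HasDerivAt.fun_sum fun i hi =>
      ((hF i hi).differentiableAt (hU.mem_nhds hz)).hasDerivAt.fun_pow n
  have hzero := hderiv.eq_zero_of_eqOn_const hU hz hsum
  simp only [mul_assoc, ← Finset.mul_sum] at hzero
  exact (mul_eq_zero.mp hzero).resolve_left hn

theorem sum_pow_pred_mul_jetD2_eq_zero (hU : IsOpen U) (hn : n ≠ 0) {z : 𝕜} (hz : z ∈ U)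
    (hF : ∀ i ∈ s, DifferentiableAt 𝕜 (F i) z)
    (hF' : ∀ i ∈ s, DifferentiableAt 𝕜 (deriv (F i)) z) (hF0 : ∀ i ∈ s, F i z ≠ 0)
    (hrel : ∀ w ∈ U, ∑ i ∈ s, F i w ^ (n - 1) * deriv (F i) w = 0) :
    ∑ i ∈ s, F i z ^ (n - 1) * jetD2 n (F i) z = 0 :=
  (HasDerivAt.fun_sum fun i hi => hasDerivAt_pow_pred_mul_deriv hn (hF i hi) (hF' i hi)
    (hF0 i hi)).eq_zero_of_eqOn_const hU hz hrel

end JetRelations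

theorem cramer_jet_differential_general (n : ℕ) (U : Set ℂ) (hU : IsOpen U)
    (f g h : ℂ → ℂ)
    (hf : DifferentiableOn ℂ f U) (hg : DifferentiableOn ℂ g U)
    (hh : DifferentiableOn ℂ h U)
    (hnz : ∀ z ∈ U, f z ≠ 0 ∧ g z ≠ 0 ∧ h z ≠ 0)
    (heq : ∀ z ∈ U, f z ^ n + g z ^ n + h z ^ n = 1) :
    ∀ z ∈ U,
      (deriv g z * (deriv (deriv h) z + (n - 1 : ℂ) * (deriv h z) ^ 2 / h z)
        - deriv h z * (deriv (deriv g) z + (n - 1 : ℂ) * (deriv g z) ^ 2 / g z))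
        / f z ^ (n - 1)
      = (deriv h z * (deriv (deriv f) z + (n - 1 : ℂ) * (deriv f z) ^ 2 / f z)
        - deriv f z * (deriv (deriv h) z + (n - 1 : ℂ) * (deriv h z) ^ 2 / h z))
        / g z ^ (n - 1)
      ∧
      (deriv h z * (deriv (deriv f) z + (n - 1 : ℂ) * (deriv f z) ^ 2 / f z)
        - deriv f z * (deriv (deriv h) z + (n - 1 : ℂ) * (deriv h z) ^ 2 / h z))
        / g z ^ (n - 1)
      = (deriv f z * (deriv (deriv g) z + (n - 1 : ℂ) * (deriv g z) ^ 2 / g z)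
        - deriv g z * (deriv (deriv f) z + (n - 1 : ℂ) * (deriv f z) ^ 2 / f z))
        / h z ^ (n - 1) := by
  intro z hz
  have hn : n ≠ 0 := by
    rintro rfl
    norm_num at heq
    exact heq z hz
  obtain ⟨hf0, hg0, hh0⟩ := hnz z hz
  set F : Fin 3 → ℂ → ℂ := ![f, g, h]
  have hF : ∀ i ∈ Finset.univ, DifferentiableOn ℂ (F i) U := by
    intro i _
    fin_cases i <;> assumption
  have hFz : ∀ i ∈ Finset.univ, DifferentiableAt ℂ (F i) z := fun i hi =>
    (hF i hi).differentiableAt (hU.mem_nhds hz)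
  have hF'z : ∀ i ∈ Finset.univ, DifferentiableAt ℂ (deriv (F i)) z := fun i hi =>
    ((hF i hi).deriv hU).differentiableAt (hU.mem_nhds hz)
  have hF0 : ∀ i ∈ Finset.univ, F i z ≠ 0 := by
    intro i _
    fin_cases i <;> assumption
  have hrel := sum_pow_pred_mul_deriv_eq_zero hU (Nat.cast_ne_zero.mpr hn) hF
    (by simpa [F, Fin.sum_univ_three] using heq)
  have hrel₂ := sum_pow_pred_mul_jetD2_eq_zero hU hn hz hFz hF'z hF0 hrel
  simp only [F, Fin.sum_univ_three] at hrel hrel₂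
  exact cross_div_eq_of_dot_eq_zero (pow_ne_zero _ hf0) (pow_ne_zero _ hg0) (pow_ne_zero _ hh0)
    (hrel z hz) hrel₂

theorem cramer_jet_differential (n : ℕ) (hn : 2 ≤ n) (U : Set ℂ) (hU : IsOpen U)
    (f g h : ℂ → ℂ)
    (hf : DifferentiableOn ℂ f U) (hg : DifferentiableOn ℂ g U)
    (hh : DifferentiableOn ℂ h U)
    (hnz : ∀ z ∈ U, f z ≠ 0 ∧ g z ≠ 0 ∧ h z ≠ 0)
    (heq : ∀ z ∈ U, f z ^ n + g z ^ n + h z ^ n = 1) :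
    ∀ z ∈ U,
      (deriv g z * (deriv (deriv h) z + (n - 1 : ℂ) * (deriv h z) ^ 2 / h z)
        - deriv h z * (deriv (deriv g) z + (n - 1 : ℂ) * (deriv g z) ^ 2 / g z))
        / f z ^ (n - 1)
      = (deriv h z * (deriv (deriv f) z + (n - 1 : ℂ) * (deriv f z) ^ 2 / f z)
        - deriv f z * (deriv (deriv h) z + (n - 1 : ℂ) * (deriv h z) ^ 2 / h z))
        / g z ^ (n - 1)
      ∧
      (deriv h z * (deriv (deriv f) z + (n - 1 : ℂ) * (deriv f z) ^ 2 / f z)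
        - deriv f z * (deriv (deriv h) z + (n - 1 : ℂ) * (deriv h z) ^ 2 / h z))
        / g z ^ (n - 1)
      = (deriv f z * (deriv (deriv g) z + (n - 1 : ℂ) * (deriv g z) ^ 2 / g z)
        - deriv g z * (deriv (deriv f) z + (n - 1 : ℂ) * (deriv f z) ^ 2 / f z))
        / h z ^ (n - 1) :=
  cramer_jet_differential_general n U hU f g h hf hg hh hnz heq
end

section
/- Let n ≥ 2, let U ⊆ ℂ be open and connected, and let f, g : U → ℂ be holomorphic and nonvanishing with f' and g' nonvanishing on U. Suppose f'·(g'' + (n-1)(g')²/g) = g'·(f'' + (n-1)(f')²/f) on U. Then there exist constants k₁, k₂ ∈ ℂ with gⁿ = k₁·fⁿ + k₂ on U. -/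
/-!
Dividing the hypothesis by `f' g'` turns it into `g''/g' + (n-1) g'/g = f''/f' + (n-1) f'/f`, an
equality of the logarithmic derivatives of `g' gⁿ⁻¹` and `f' fⁿ⁻¹`. On a connected open set this
makes `g' gⁿ⁻¹ = k₁ f' fⁿ⁻¹`, that is `(gⁿ)' = k₁ (fⁿ)'`, and integrating once more gives
`gⁿ = k₁ fⁿ + k₂`.
-/

open Set

section

variable {𝕜 : Type*}

theorem logDeriv_deriv_mul_pow [NontriviallyNormedField 𝕜] {h : 𝕜 → 𝕜} {z : 𝕜}
    (hh : DifferentiableAt 𝕜 h z) (hh' : DifferentiableAt 𝕜 (deriv h) z)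
    (hz : h z ≠ 0) (hz' : deriv h z ≠ 0) (m : ℕ) :
    logDeriv (fun w => deriv h w * h w ^ m) z = logDeriv (deriv h) z + m * logDeriv h z := by
  rw [logDeriv_mul (g := (h · ^ m)) z hz' (pow_ne_zero m hz) hh' (hh.pow m), logDeriv_fun_pow hh]

theorem IsOpen.exists_pow_succ_eq_add_of_deriv_mul_pow_eqOn [RCLike 𝕜] {U : Set 𝕜} (hU : IsOpen U)
    (hUc : IsPreconnected U) {f g : 𝕜 → 𝕜} (hf : DifferentiableOn 𝕜 f U)
    (hg : DifferentiableOn 𝕜 g U) {k : 𝕜} {m : ℕ}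
    (hfg : EqOn (fun z => deriv g z * g z ^ m) (k • fun z => deriv f z * f z ^ m) U) :
    ∃ c, ∀ z ∈ U, g z ^ (m + 1) = k * f z ^ (m + 1) + c := by
  have hderiv : EqOn (deriv (g · ^ (m + 1))) (deriv (fun z => k * f z ^ (m + 1))) U := by
    intro z hz
    have hfz := hf.differentiableAt (hU.mem_nhds hz)
    have hgz := hg.differentiableAt (hU.mem_nhds hz)
    have hfgz : deriv g z * g z ^ m = k * (deriv f z * f z ^ m) := hfg hz
    rw [deriv_fun_pow hgz, deriv_const_mul _ (hfz.fun_pow _), deriv_fun_pow hfz,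
      Nat.add_sub_cancel]
    push_cast
    linear_combination ((m : 𝕜) + 1) * hfgz
  obtain ⟨c, hc⟩ := hU.exists_eq_add_of_deriv_eq hUc (hg.pow _) ((hf.pow _).const_mul k) hderiv
  exact ⟨c, fun z hz => hc hz⟩

end

theorem ode_integration_step (n : ℕ) (hn : 2 ≤ n) (U : Set ℂ) (hU : IsOpen U)
    (hUc : IsConnected U) (f g : ℂ → ℂ)
    (hf : DifferentiableOn ℂ f U) (hg : DifferentiableOn ℂ g U)
    (hf' : DifferentiableOn ℂ (deriv f) U) (hg' : DifferentiableOn ℂ (deriv g) U)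
    (hfz : ∀ z ∈ U, f z ≠ 0) (hgz : ∀ z ∈ U, g z ≠ 0)
    (hfz' : ∀ z ∈ U, deriv f z ≠ 0) (hgz' : ∀ z ∈ U, deriv g z ≠ 0)
    (heq : ∀ z ∈ U,
      deriv f z * (deriv (deriv g) z + (n - 1 : ℂ) * (deriv g z) ^ 2 / g z)
      = deriv g z * (deriv (deriv f) z + (n - 1 : ℂ) * (deriv f z) ^ 2 / f z)) :
    ∃ k₁ k₂ : ℂ, ∀ z ∈ U, g z ^ n = k₁ * f z ^ n + k₂ := by
  obtain ⟨m, rfl⟩ : ∃ m, n = m + 1 := ⟨n - 1, by omega⟩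
  have hlog : EqOn (logDeriv fun z => deriv g z * g z ^ m)
      (logDeriv fun z => deriv f z * f z ^ m) U := by
    intro z hz
    have hnhds := hU.mem_nhds hz
    rw [logDeriv_deriv_mul_pow (hg.differentiableAt hnhds) (hg'.differentiableAt hnhds)
        (hgz z hz) (hgz' z hz),
      logDeriv_deriv_mul_pow (hf.differentiableAt hnhds) (hf'.differentiableAt hnhds)
        (hfz z hz) (hfz' z hz)]
    have heqz := heq z hz
    simp only [logDeriv_apply]
    push_cast at heqz
    field_simp [hfz z hz, hgz z hz, hfz' z hz, hgz' z hz] at heqz ⊢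
    linear_combination heqz
  obtain ⟨k₁, -, hk₁⟩ := (logDeriv_eqOn_iff (hg'.mul (hg.pow m)) (hf'.mul (hf.pow m)) hU
    hUc.isPreconnected (fun z hz => mul_ne_zero (hfz' z hz) (pow_ne_zero m (hfz z hz)))
    (fun z hz => mul_ne_zero (hgz' z hz) (pow_ne_zero m (hgz z hz)))).mp hlog
  obtain ⟨k₂, hk₂⟩ := hU.exists_pow_succ_eq_add_of_deriv_mul_pow_eqOn hUc.isPreconnected hf hg hk₁
  exact ⟨k₁, k₂, hk₂⟩
end

section
/- Let n, m ≥ 2, let U ⊆ ℂ be open and connected, and let f, g : U → ℂ be holomorphic and nonvanishing with f', g' nonvanishing on U. Suppose f'·(g'' + (m-1)(g')²/g) = g'·(f'' + (n-1)(f')²/f) on U. Then there exist constants c₁, c₂ ∈ ℂ with gᵐ = c₁·fⁿ + c₂ on U. -/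
/-! Dividing the equation by `f' g'` turns it into the equality of the logarithmic derivatives of
`g ^ (m - 1) * g'` and `f ^ (n - 1) * f'`, so on the connected set `U` these differ by a constant
factor `c`. Then `(g ^ m)' = (m c / n) (f ^ n)'`, and one more integration gives the claim. -/

open Set

theorem logDeriv_pow_mul_deriv {𝕜 : Type*} [NontriviallyNormedField 𝕜] {g : 𝕜 → 𝕜} {x : 𝕜}
    (hg : DifferentiableAt 𝕜 g x) (hg' : DifferentiableAt 𝕜 (deriv g) x) (hgx : g x ≠ 0)
    (hgx' : deriv g x ≠ 0) (k : ℕ) :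
    logDeriv (fun z ↦ g z ^ k * deriv g z) x =
      k * deriv g x / g x + deriv (deriv g) x / deriv g x := by
  rw [logDeriv_mul (f := fun z ↦ g z ^ k) x (pow_ne_zero k hgx) hgx' (hg.pow k) hg',
    logDeriv_fun_pow hg, logDeriv_apply, logDeriv_apply, mul_div_assoc]

theorem exists_pow_eq_mul_pow_add_of_eqOn {𝕜 : Type*} [RCLike 𝕜] {U : Set 𝕜} (hU : IsOpen U)
    (hU' : IsPreconnected U) {f g : 𝕜 → 𝕜} (hf : DifferentiableOn 𝕜 f U)
    (hg : DifferentiableOn 𝕜 g U) {n : ℕ} (hn : n ≠ 0) (m : ℕ) {c : 𝕜}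
    (h : EqOn (fun z ↦ g z ^ (m - 1) * deriv g z) (c • fun z ↦ f z ^ (n - 1) * deriv f z) U) :
    ∃ d, ∀ z ∈ U, g z ^ m = m * c / n * f z ^ n + d := by
  have hderiv : EqOn (deriv fun z ↦ g z ^ m) (deriv fun z ↦ m * c / n * f z ^ n) U := by
    intro z hz
    have hgf : g z ^ (m - 1) * deriv g z = c * (f z ^ (n - 1) * deriv f z) := h hz
    rw [deriv_const_mul_field, deriv_fun_pow (hg.differentiableAt (hU.mem_nhds hz)),
      deriv_fun_pow (hf.differentiableAt (hU.mem_nhds hz)), mul_assoc, hgf]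
    field_simp
  exact hU.exists_eq_add_of_deriv_eq hU' (hg.pow m) ((hf.pow n).const_mul _) hderiv

theorem generalized_ode_integration_step (n m : ℕ) (hn : 2 ≤ n) (hm : 2 ≤ m)
    (U : Set ℂ) (hU : IsOpen U) (hUc : IsConnected U) (f g : ℂ → ℂ)
    (hf : DifferentiableOn ℂ f U) (hg : DifferentiableOn ℂ g U)
    (hf' : DifferentiableOn ℂ (deriv f) U) (hg' : DifferentiableOn ℂ (deriv g) U)
    (hfz : ∀ z ∈ U, f z ≠ 0) (hgz : ∀ z ∈ U, g z ≠ 0)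
    (hfz' : ∀ z ∈ U, deriv f z ≠ 0) (hgz' : ∀ z ∈ U, deriv g z ≠ 0)
    (heq : ∀ z ∈ U,
      deriv f z * (deriv (deriv g) z + (m - 1 : ℂ) * (deriv g z) ^ 2 / g z)
      = deriv g z * (deriv (deriv f) z + (n - 1 : ℂ) * (deriv f z) ^ 2 / f z)) :
    ∃ c₁ c₂ : ℂ, ∀ z ∈ U, g z ^ m = c₁ * f z ^ n + c₂ := by
  have hlog : EqOn (logDeriv fun z ↦ g z ^ (m - 1) * deriv g z)
      (logDeriv fun z ↦ f z ^ (n - 1) * deriv f z) U := by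
    intro z hz
    have hz' := hU.mem_nhds hz
    have hf0 := hfz z hz
    have hg0 := hgz z hz
    have hf0' := hfz' z hz
    have hg0' := hgz' z hz
    rw [logDeriv_pow_mul_deriv (hg.differentiableAt hz') (hg'.differentiableAt hz') hg0 hg0',
      logDeriv_pow_mul_deriv (hf.differentiableAt hz') (hf'.differentiableAt hz') hf0 hf0',
      Nat.cast_pred (by omega), Nat.cast_pred (by omega)]
    have key := heq z hz
    field_simp at key ⊢
    linear_combination key
  obtain ⟨c, -, hc⟩ := (logDeriv_eqOn_iff ((hg.pow _).mul hg') ((hf.pow _).mul hf') hU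
    hUc.isPreconnected (fun z hz ↦ mul_ne_zero (pow_ne_zero _ (hfz z hz)) (hfz' z hz))
    (fun z hz ↦ mul_ne_zero (pow_ne_zero _ (hgz z hz)) (hgz' z hz))).1 hlog
  exact ⟨_, exists_pow_eq_mul_pow_add_of_eqOn hU hUc.isPreconnected hf hg (by omega) m hc⟩
end

section
/- Let f, g : ℂ → ℂ be entire functions with f² + g² = 1 on ℂ. Then there exists an entire function α : ℂ → ℂ with f = cos ∘ α and g = sin ∘ α. -/
/-!
Since `(f + g i)(f - g i) = f² + g² = 1`, the entire function `f + g i` has no zeros, so it has an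
entire logarithm `L` (a primitive of its logarithmic derivative). With `α = L / i` we get
`exp (α i) = f + g i` and `exp (-α i) = f - g i`, and Euler's formulas give `cos α = f`, `sin α = g`.
-/

open Complex

theorem Complex.exists_differentiable_exp_eq {h : ℂ → ℂ} (hd : Differentiable ℂ h)
    (hne : ∀ z, h z ≠ 0) : ∃ L : ℂ → ℂ, Differentiable ℂ L ∧ ∀ z, exp (L z) = h z := by
  obtain ⟨L, hL0, hL⟩ := (hd.deriv.div hd hne).isExactOn_univ.with_val_at 0 (log (h 0))
  have hL' : ∀ z, HasDerivAt L (deriv h z / h z) z := fun z => hL z (Set.mem_univ z)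
  have hderiv : ∀ z, HasDerivAt (fun z => exp (-L z) * h z) 0 z := fun z => by
    refine ((hL' z).neg.cexp.mul (hd z).hasDerivAt).congr_deriv ?_
    field_simp [hne z]
    ring
  have hone : ∀ z, exp (-L z) * h z = 1 := fun z => by
    rw [is_const_of_deriv_eq_zero (fun z => (hderiv z).differentiableAt)
      (fun z => (hderiv z).deriv) z 0, hL0, exp_neg, exp_log (hne 0), inv_mul_cancel₀ (hne 0)]
  refine ⟨L, fun z => (hL' z).differentiableAt, fun z => ?_⟩
  rw [← inv_mul_eq_one₀ (exp_ne_zero (L z)), ← exp_neg]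
  exact hone z

theorem Complex.cos_eq_and_sin_eq_of_exp_mul_I_eq {a b θ : ℂ} (hab : a ^ 2 + b ^ 2 = 1)
    (h : exp (θ * I) = a + b * I) : cos θ = a ∧ sin θ = b := by
  have hinv : exp (-θ * I) = a - b * I := by
    rw [neg_mul, exp_neg, h, inv_eq_of_mul_eq_one_right]
    linear_combination hab - b ^ 2 * I_sq
  have hplus := (cos_add_sin_I θ).trans h
  have hminus := (cos_sub_sin_I θ).trans hinv
  refine ⟨by linear_combination (hplus + hminus) / 2, mul_right_cancel₀ I_ne_zero ?_⟩
  linear_combination (hplus - hminus) / 2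

theorem fermat_n2_classification (f g : ℂ → ℂ)
    (hf : Differentiable ℂ f) (hg : Differentiable ℂ g)
    (heq : ∀ z : ℂ, f z ^ 2 + g z ^ 2 = 1) :
    ∃ α : ℂ → ℂ, Differentiable ℂ α ∧ f = Complex.cos ∘ α ∧ g = Complex.sin ∘ α := by
  have hne : ∀ z, f z + g z * I ≠ 0 := fun z hz => by
    have hprod : (f z + g z * I) * (f z - g z * I) = 1 := by
      linear_combination heq z - g z ^ 2 * I_sq
    simp [hz] at hprod
  obtain ⟨L, hLd, hL⟩ := exists_differentiable_exp_eq (hf.add (hg.mul_const I)) hne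
  have hcs : ∀ z, cos (L z / I) = f z ∧ sin (L z / I) = g z := fun z =>
    cos_eq_and_sin_eq_of_exp_mul_I_eq (heq z) (by rw [div_mul_cancel₀ _ I_ne_zero]; exact hL z)
  exact ⟨fun z => L z / I, hLd.div_const I, funext fun z => (hcs z).1.symm,
    funext fun z => (hcs z).2.symm⟩
end
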